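/- arXiv:1006.3627 — 5 statements merged into one kernel-verified Lean document; each statement's English description precedes it below -/
import Mathlib

section
/- Let S be a linear subspace of ℝ^s, b ∈ ℝ^s a point with all coordinates strictly positive, and z ∈ S + b a point with all coordinates nonnegative. Define α ∈ {0,1}^s by α_i = 1 if z_i > 0 and α_i = 0 otherwise. Then the set (α + S) ∩ ℝ^s_{≥0} contains a point with all coordinates strictly positive. -/
open MvPolynomial Relation

/-- A chemical reaction network on `s` species: a finite directed graph whose
vertices are labeled by distinct monomials (exponent vectors). -/
structure CRN (s : ℕ) where
  n : ℕ
  edge : Fin n → Fin n → Prop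
  ψ : Fin n → (Fin s → ℕ)
  inj : Function.Injective ψ

variable {s : ℕ}

/-- Weak reversibility: every connected component of the reaction graph is
strongly connected, i.e. undirected reachability implies directed reachability. -/
def CRN.weaklyReversible (G : CRN s) : Prop :=
  ∀ i j, Relation.ReflTransGen (fun a b => G.edge a b ∨ G.edge b a) i j →
    Relation.ReflTransGen G.edge i j

/-- Directed edge of the event-graph: `(N·ψ i, N·ψ j)` for an edge `(i,j)` of `G`
and a monic monomial `N` (exponent vector `c`). -/
def CRN.eventEdge (G : CRN s) (M N : Fin s → ℕ) : Prop :=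
  ∃ i j c, G.edge i j ∧ M = c + G.ψ i ∧ N = c + G.ψ j

/-- Directed reachability in the event-graph. -/
def CRN.eventReach (G : CRN s) (M N : Fin s → ℕ) : Prop :=
  Relation.ReflTransGen G.eventEdge M N

/-- Path-connectedness (in the undirected sense) in the event-graph. -/
def CRN.connected (G : CRN s) (M N : Fin s → ℕ) : Prop :=
  Relation.ReflTransGen (fun a b => G.eventEdge a b ∨ G.eventEdge b a) M N

/-- gcd of two monomials, as exponent vectors. -/
def mgcd (M N : Fin s → ℕ) : Fin s → ℕ := fun i => min (M i) (N i)

/-- A weakly-reversible CRN is catalytic iff some path-connected monomials `M, N`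
in the event-graph become disconnected after dividing by their gcd. -/
def CRN.catalytic (G : CRN s) : Prop :=
  ∃ M N : Fin s → ℕ, G.connected M N ∧
    ¬ G.connected (M - mgcd M N) (N - mgcd M N)

/-- The monic monomial with exponent vector `e`, as a polynomial. -/
noncomputable def mon (k : Type*) [CommSemiring k] (e : Fin s → ℕ) :
    MvPolynomial (Fin s) k :=
  MvPolynomial.monomial (Finsupp.equivFunOnFinite.symm e) 1

/-- The set of binomials of the associated event-system `E_G` (one binomial for
each edge of the underlying undirected graph of `G`). -/
def CRN.eventSystem (G : CRN s) (k : Type*) [CommRing k] :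
    Set (MvPolynomial (Fin s) k) :=
  {p | ∃ i j, (G.edge i j ∨ G.edge j i) ∧ p = mon k (G.ψ i) - mon k (G.ψ j)}

/-- The ideal `(E_G)` generated by the associated event-system. -/
noncomputable def CRN.eventIdeal (G : CRN s) (k : Type*) [CommRing k] :
    Ideal (MvPolynomial (Fin s) k) :=
  Ideal.span (G.eventSystem k)

/-- The stoichiometric subspace of `G`. -/
def CRN.stoich (G : CRN s) : Submodule ℝ (Fin s → ℝ) :=
  Submodule.span ℝ
    {v | ∃ i j, G.edge i j ∧ v = fun t => (G.ψ j t : ℝ) - (G.ψ i t : ℝ)}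

/-- `Z` is a siphon of `G`. -/
def CRN.siphon (G : CRN s) (Z : Set (Fin s)) : Prop :=
  Z.Nonempty ∧ ∀ i j, G.edge i j →
    (∃ l ∈ Z, G.ψ j l ≠ 0) → (∃ l ∈ Z, G.ψ i l ≠ 0)

/-- `Z` is a critical siphon of `G`: a siphon whose zero pattern is realized by a
nonnegative point whose invariant polyhedron meets the positive orthant. -/
def CRN.criticalSiphon (G : CRN s) (Z : Set (Fin s)) : Prop :=
  G.siphon Z ∧ ∃ z : Fin s → ℝ, (∀ i, 0 ≤ z i) ∧ Z = {i | z i = 0} ∧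
    ∃ p : Fin s → ℝ, (∀ i, 0 < p i) ∧ p - z ∈ G.stoich

/-- The underlying undirected CRN (every reaction made reversible). -/
def CRN.sym (G : CRN s) : CRN s :=
  ⟨G.n, fun i j => G.edge i j ∨ G.edge j i, G.ψ, G.inj⟩

/-- A point `a` is a zero of all binomials in the event-system of `G`. -/
def CRN.vanishesAt (G : CRN s) {k : Type*} [CommRing k] (a : Fin s → k) : Prop :=
  ∀ i j, G.edge i j → ∏ t, a t ^ G.ψ i t = ∏ t, a t ^ G.ψ j t

/-- The saturation `I : f^∞`, as a set. -/
def satSet {R : Type*} [CommRing R] (I : Ideal R) (f : R) : Set R :=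
  {g | ∃ m : ℕ, 0 < m ∧ f ^ m * g ∈ I}

/-! Perturb the indicator `α` of the support of `z` in the direction `b - z ∈ S`: for small
`ε > 0`, the point `α + ε • (b - z)` is `1 + ε (b i - z i) > 0` on the support of `z` and
`ε b i > 0` off it. -/

theorem exists_pos_forall_mul_lt_one {ι : Type*} [Finite ι] (z : ι → ℝ) :
    ∃ ε : ℝ, 0 < ε ∧ ∀ i, ε * z i < 1 := by
  obtain ⟨M, hM⟩ := Finite.exists_le z
  refine ⟨(|M| + 1)⁻¹, by positivity, fun i => ?_⟩
  rw [inv_mul_lt_one₀ (by positivity)]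
  linarith [hM i, le_abs_self M]

theorem indicator_pos_add_mul_sub_pos {ε b z : ℝ} (hε : 0 < ε) (hb : 0 < b) (hz : 0 ≤ z)
    (hεz : ε * z < 1) : 0 < (if 0 < z then (1 : ℝ) else 0) + ε * (b - z) := by
  split_ifs with hzpos
  · linarith [mul_pos hε hb, mul_sub ε b z]
  · obtain rfl : z = 0 := le_antisymm (not_lt.mp hzpos) hz
    simpa using mul_pos hε hb

/-- Lemma 4.7 (linear algebra): the 0/1 pattern of a nonnegative point of `S + b`
(`b` positive) has an invariant polyhedron meeting the positive orthant. -/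
theorem indicator_polyhedron_meets_positive {s : ℕ}
    (S : Submodule ℝ (Fin s → ℝ)) (b z : Fin s → ℝ)
    (hb : ∀ i, 0 < b i) (hz : ∀ i, 0 ≤ z i) (hzS : z - b ∈ S) :
    ∃ d : Fin s → ℝ, (∀ i, 0 < d i) ∧
      d - (fun i => if 0 < z i then (1 : ℝ) else 0) ∈ S := by
  obtain ⟨ε, hε, hεz⟩ := exists_pos_forall_mul_lt_one z
  have hbz : b - z ∈ S := by simpa using S.neg_mem hzS
  refine ⟨(fun i => if 0 < z i then (1 : ℝ) else 0) + ε • (b - z), fun i => ?_, ?_⟩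
  · exact indicator_pos_add_mul_sub_pos hε (hb i) (hz i) (hεz i)
  · simpa only [add_sub_cancel_left] using S.smul_mem ε hbz
end

section
/- Let G be a weakly-reversible CRN with associated event-system E_G. If M and N are distinct monic monomials with M − N in the ideal (E_G), then M and N are path-connected in the event-graph of G. -/
open MvPolynomial Relation

variable {s : ℕ}

/-!
Connectedness in the event-graph is a congruence on exponent vectors: a path
`M ~ N` translates to a path `M + c ~ N + c`. Sending each monomial `x^e` to the
basis element of its class in the monoid algebra of the quotient monoid is therefore
a ring homomorphism, and it kills every binomial of `E_G`, hence all of `(E_G)`.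
It sends `x^M - x^N` to a difference of two basis elements, which vanishes only
when `M` and `N` have the same class.
-/

namespace CRN

theorem eventEdge_add_right (G : CRN s) (c : Fin s → ℕ) {a b : Fin s → ℕ}
    (h : G.eventEdge a b) : G.eventEdge (a + c) (b + c) := by
  obtain ⟨i, j, d, hij, rfl, rfl⟩ := h
  exact ⟨i, j, d + c, hij, add_right_comm _ _ _, add_right_comm _ _ _⟩

theorem connected_add_right (G : CRN s) (c : Fin s → ℕ) {a b : Fin s → ℕ}
    (h : G.connected a b) : G.connected (a + c) (b + c) :=
  h.lift (· + c) fun _ _ hab => hab.imp (G.eventEdge_add_right c) (G.eventEdge_add_right c)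

theorem connected_symm (G : CRN s) {a b : Fin s → ℕ} (h : G.connected a b) :
    G.connected b a :=
  have : Std.Symm fun a b => G.eventEdge a b ∨ G.eventEdge b a := ⟨fun _ _ hab => hab.symm⟩
  Std.Symm.symm (r := Relation.ReflTransGen _) _ _ h

theorem connected_ψ (G : CRN s) {i j : Fin G.n} (hij : G.edge i j ∨ G.edge j i) :
    G.connected (G.ψ i) (G.ψ j) := by
  refine .single (hij.imp (fun h => ⟨i, j, 0, h, ?_, ?_⟩) (fun h => ⟨j, i, 0, h, ?_, ?_⟩)) <;>
    exact (zero_add _).symm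

def connectedCon (G : CRN s) : AddCon (Fin s → ℕ) where
  r := G.connected
  iseqv := ⟨fun _ => .refl, G.connected_symm, .trans⟩
  add' {a b c d} hab hcd := by
    have hcd' : G.connected (a + c) (a + d) := by
      simpa only [add_comm a] using G.connected_add_right a hcd
    exact hcd'.trans (G.connected_add_right d hab)

end CRN

section QuotientHom

variable (k : Type*) [CommRing k] (c : AddCon (Fin s → ℕ))

noncomputable def monQuotientHom : MvPolynomial (Fin s) k →+* AddMonoidAlgebra k c.Quotient :=
  AddMonoidAlgebra.mapDomainRingHom k ((AddCon.mk' c).comp Finsupp.coeFnAddHom)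

theorem monQuotientHom_mon (e : Fin s → ℕ) :
    monQuotientHom k c (mon k e) = AddMonoidAlgebra.single (e : c.Quotient) 1 := by
  rw [mon, ← single_eq_monomial]
  exact AddMonoidAlgebra.mapDomain_single

theorem mon_sub_mon_mem_ker_monQuotientHom {a b : Fin s → ℕ} (hab : c a b) :
    mon k a - mon k b ∈ RingHom.ker (monQuotientHom k c) := by
  rw [RingHom.mem_ker, map_sub, sub_eq_zero, monQuotientHom_mon, monQuotientHom_mon,
    (AddCon.eq c).mpr hab]

theorem rel_of_mon_sub_mon_mem_ker_monQuotientHom [Nontrivial k] {a b : Fin s → ℕ}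
    (h : mon k a - mon k b ∈ RingHom.ker (monQuotientHom k c)) : c a b := by
  rwa [RingHom.mem_ker, map_sub, sub_eq_zero, monQuotientHom_mon, monQuotientHom_mon,
    AddMonoidAlgebra.single_left_inj one_ne_zero, AddCon.eq] at h

end QuotientHom

theorem CRN.eventIdeal_le_ker (G : CRN s) (k : Type*) [CommRing k] :
    G.eventIdeal k ≤ RingHom.ker (monQuotientHom k G.connectedCon) :=
  Ideal.span_le.mpr fun _ ⟨_, _, hij, hp⟩ =>
    hp ▸ mon_sub_mon_mem_ker_monQuotientHom k _ (G.connected_ψ hij)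

theorem mem_eventIdeal_imp_connected_general {k : Type*} [Field k] {s : ℕ}
    (G : CRN s) (M N : Fin s → ℕ)
    (h : mon k M - mon k N ∈ G.eventIdeal k) :
    G.connected M N :=
  rel_of_mon_sub_mon_mem_ker_monQuotientHom k G.connectedCon (G.eventIdeal_le_ker k h)

/-- If the difference of two distinct monic monomials lies in `(E_G)`, then the
monomials are path-connected in the event-graph. -/
theorem mem_eventIdeal_imp_connected {k : Type*} [Field k] [CharZero k] {s : ℕ}
    (G : CRN s) (hwr : G.weaklyReversible) (M N : Fin s → ℕ) (hMN : M ≠ N)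
    (h : mon k M - mon k N ∈ G.eventIdeal k) :
    G.connected M N :=
  mem_eventIdeal_imp_connected_general G M N h
end

section
/- Let G be a weakly-reversible CRN. A set Z ⊆ {1,...,s} is a siphon of G if and only if there exists a point α ∈ ℝ^s_{≥0} vanishing on all binomials in E_G with Z = {i : α_i = 0}. Moreover Z is a critical siphon if and only if such an α exists whose invariant polyhedron (α + S_G) ∩ ℝ^s_{≥0} intersects the positive orthant. -/
open MvPolynomial Relation

variable {s : ℕ}

/-! A nonnegative point `α` kills the monomial `x^ψ` exactly when `supp ψ` meets the zero
set `Z` of `α`, so `α` vanishes on `E_G` iff along every edge both ends meet `Z` or neither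
does. The siphon condition gives one implication and weak reversibility the other, which
makes the indicator of `Zᶜ` a zero of `E_G` for every siphon `Z`. -/

lemma prod_pow_eq_zero_iff {ι M₀ : Type*} [Fintype ι] [CommMonoidWithZero M₀]
    [Nontrivial M₀] [NoZeroDivisors M₀] (a : ι → M₀) (e : ι → ℕ) :
    ∏ t, a t ^ e t = 0 ↔ ∃ l ∈ {i | a i = 0}, e l ≠ 0 := by
  simp [Finset.prod_eq_zero_iff, pow_eq_zero_iff']

open Classical in
lemma prod_indicator_compl_pow {ι M₀ : Type*} [Fintype ι] [CommMonoidWithZero M₀]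
    (Z : Set ι) (e : ι → ℕ) :
    ∏ t, Zᶜ.indicator (1 : ι → M₀) t ^ e t = if ∃ l ∈ Z, e l ≠ 0 then 0 else 1 := by
  split_ifs with h
  · obtain ⟨l, hl, hel⟩ := h
    exact Finset.prod_eq_zero (Finset.mem_univ l) (by simp [hl, zero_pow hel])
  · push Not at h
    refine Finset.prod_eq_one fun t _ => ?_
    by_cases ht : t ∈ Z <;> simp [ht, h]

lemma setOf_indicator_compl_eq_zero {ι M₀ : Type*} [MulZeroOneClass M₀] [Nontrivial M₀]
    (Z : Set ι) : {i | Zᶜ.indicator (1 : ι → M₀) i = 0} = Z := by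
  ext i
  by_cases hi : i ∈ Z <;> simp [hi]

namespace CRN

variable (G : CRN s) {Z : Set (Fin s)}

lemma siphon.exists_mem_ne_zero_of_reflTransGen (hZ : G.siphon Z) {i j : Fin G.n}
    (hij : ReflTransGen G.edge i j) (hj : ∃ l ∈ Z, G.ψ j l ≠ 0) :
    ∃ l ∈ Z, G.ψ i l ≠ 0 := by
  induction hij with
  | refl => exact hj
  | tail _ hbc ih => exact ih (hZ.2 _ _ hbc hj)

/-- In a weakly reversible network a siphon condition also holds against the edges,
since every edge `i → j` is closed up by a directed path `j ⇝ i`. -/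
lemma siphon.exists_mem_ne_zero_iff (hwr : G.weaklyReversible) (hZ : G.siphon Z)
    {i j : Fin G.n} (hij : G.edge i j) :
    (∃ l ∈ Z, G.ψ i l ≠ 0) ↔ ∃ l ∈ Z, G.ψ j l ≠ 0 :=
  ⟨hZ.exists_mem_ne_zero_of_reflTransGen G (hwr j i (.single (.inr hij))),
    hZ.2 i j hij⟩

lemma vanishesAt_indicator_compl {k : Type*} [CommRing k] (hwr : G.weaklyReversible)
    (hZ : G.siphon Z) : G.vanishesAt (Zᶜ.indicator (1 : Fin s → k)) := by
  intro i j hij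
  classical
  rw [prod_indicator_compl_pow, prod_indicator_compl_pow]
  congr 1
  exact propext (hZ.exists_mem_ne_zero_iff G hwr hij)

lemma siphon_setOf_eq_zero {k : Type*} [CommRing k] [IsDomain k] {α : Fin s → k}
    (hα : G.vanishesAt α) (hne : {i | α i = 0}.Nonempty) :
    G.siphon {i | α i = 0} := by
  refine ⟨hne, fun i j hij hj => ?_⟩
  rw [← prod_pow_eq_zero_iff] at hj ⊢
  rwa [hα i j hij]

end CRN

/-- Shrinking `p - z` by `t = (1 + ∑ z)⁻¹` makes `t • z` pointwise at most the
indicator of the complement of `Z`, and `t • p` is still positive. -/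
lemma exists_pos_sub_indicator_compl_mem {ι 𝕜 : Type*} [Fintype ι] [Field 𝕜] [LinearOrder 𝕜]
    [IsStrictOrderedRing 𝕜] (S : Submodule 𝕜 (ι → 𝕜)) {Z : Set ι} {z p : ι → 𝕜}
    (hz : ∀ i, 0 ≤ z i) (hzZ : ∀ i ∈ Z, z i = 0) (hp : ∀ i, 0 < p i) (hpz : p - z ∈ S) :
    ∃ q : ι → 𝕜, (∀ i, 0 < q i) ∧ q - Zᶜ.indicator 1 ∈ S := by
  set t : 𝕜 := (1 + ∑ i, z i)⁻¹
  have hsum : 0 ≤ ∑ i, z i := Finset.sum_nonneg fun i _ => hz i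
  have ht : 0 < t := by positivity
  have htz : ∀ i, t * z i ≤ Zᶜ.indicator 1 i := by
    intro i
    by_cases hi : i ∈ Z
    · simp [hi, hzZ i hi]
    · have hzi : z i ≤ 1 + ∑ i, z i :=
        (Finset.single_le_sum (fun j _ => hz j) (Finset.mem_univ i)).trans (by linarith)
      simpa [hi, t, inv_mul_le_iff₀ (by linarith : (0 : 𝕜) < 1 + ∑ i, z i)] using hzi
  refine ⟨Zᶜ.indicator 1 + t • (p - z), fun i => ?_, by simpa using S.smul_mem t hpz⟩
  have := mul_pos ht (hp i)
  simp only [Pi.add_apply, Pi.smul_apply, Pi.sub_apply, smul_eq_mul]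
  linarith [htz i]

/-- Siphons are exactly the zero patterns of nonnegative zeros of `E_G`, and
critical siphons correspond to critical siphon-points. -/
theorem siphon_iff_siphonPoint {s : ℕ} (G : CRN s) (hwr : G.weaklyReversible)
    (Z : Set (Fin s)) (hZ : Z.Nonempty) :
    (G.siphon Z ↔ ∃ α : Fin s → ℝ, (∀ i, 0 ≤ α i) ∧ G.vanishesAt α ∧
        Z = {i | α i = 0}) ∧
    (G.criticalSiphon Z ↔ ∃ α : Fin s → ℝ, (∀ i, 0 ≤ α i) ∧ G.vanishesAt α ∧
        Z = {i | α i = 0} ∧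
        ∃ p : Fin s → ℝ, (∀ i, 0 < p i) ∧ p - α ∈ G.stoich) := by
  have hind_nonneg : ∀ i, (0 : ℝ) ≤ Zᶜ.indicator 1 i :=
    Set.indicator_nonneg fun _ _ => zero_le_one
  refine ⟨⟨fun hs => ?_, ?_⟩, ⟨?_, ?_⟩⟩
  · exact ⟨_, hind_nonneg, G.vanishesAt_indicator_compl hwr hs,
      (setOf_indicator_compl_eq_zero Z).symm⟩
  · rintro ⟨α, -, hα, rfl⟩
    exact G.siphon_setOf_eq_zero hα hZ
  · rintro ⟨hs, z, hz, hZz, p, hp, hpz⟩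
    obtain ⟨q, hq, hqS⟩ := exists_pos_sub_indicator_compl_mem (Z := Z) G.stoich hz
      (fun i hi => by rwa [hZz] at hi) hp hpz
    exact ⟨_, hind_nonneg, G.vanishesAt_indicator_compl hwr hs,
      (setOf_indicator_compl_eq_zero Z).symm, q, hq, hqS⟩
  · rintro ⟨α, hα0, hα, rfl, p, hp, hpα⟩
    exact ⟨G.siphon_setOf_eq_zero hα hZ, α, hα0, rfl, p, hp, hpα⟩
end

section
/- Let G be a weakly-reversible, non-catalytic CRN. Then the set of positive real zeros V_ℝ(E_G) ∩ ℝ^s_{>0} is dense (in the Euclidean topology) in the set of nonnegative real zeros V_ℝ(E_G) ∩ ℝ^s_{≥0}. -/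
/-!
Let `a ≥ 0` be a real zero with zero set `Z`, and let `L` be the span of the reaction vectors.
After scaling, a rational `q ∈ L` is an exponent difference `M - P` of connected monomials;
non-catalyticity lets us take `M = q⁺`, `P = q⁻`, and then `a ^ q⁺ = a ^ q⁻`. Hence
`⟪q, log a⟫ = 0` when `q` vanishes on `Z`, and `q ≥ 0` on `Z` forces `q = 0` on `Z`. As `L` and
the coordinate conditions are defined over `ℚ`, both facts pass to real vectors of `L`. The
Fredholm and Gordan alternatives then give `y, w ∈ Lᗮ` with `y = log a` off `Z`, `w = 0` off `Z`
and `w < 0` on `Z`, so `exp (y + n • w)` are positive zeros converging to `a`.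
-/

open MvPolynomial Relation

variable {s : ℕ}

open Finset InnerProductSpace

section RationalSubspaces

variable {ι : Type*}

def castVec (u : ι → ℚ) : EuclideanSpace ℝ ι := WithLp.toLp 2 fun t => (u t : ℝ)

@[simp] lemma castVec_apply (u : ι → ℚ) (t : ι) : castVec u t = u t := rfl

def realSpan (U : Submodule ℚ (ι → ℚ)) : Submodule ℝ (EuclideanSpace ℝ ι) :=
  Submodule.span ℝ (castVec '' U)

lemma realSpan_mono {U V : Submodule ℚ (ι → ℚ)} (h : U ≤ V) : realSpan U ≤ realSpan V :=
  Submodule.span_mono (Set.image_mono h)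

lemma mem_realSpan_inf_ker_proj [Fintype ι] (U : Submodule ℚ (ι → ℚ)) {x : EuclideanSpace ℝ ι}
    (hx : x ∈ realSpan U) {t : ι} (ht : x t = 0) :
    x ∈ realSpan (U ⊓ LinearMap.ker (LinearMap.proj t)) := by
  by_cases hU : ∀ u ∈ U, u t = 0
  · rwa [inf_eq_left.2 fun u hu => hU u hu]
  obtain ⟨u₀, hu₀, hu₀t⟩ : ∃ u ∈ U, u t ≠ 0 := by simpa using hU
  -- `ρ` kills the `t`-th coordinate along `u₀`; it fixes `x` and maps `U` into `U ∩ {u t = 0}`.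
  let ρ : EuclideanSpace ℝ ι →ₗ[ℝ] EuclideanSpace ℝ ι :=
    LinearMap.id - ((u₀ t : ℝ)⁻¹ • (EuclideanSpace.proj t : EuclideanSpace ℝ ι →L[ℝ] ℝ)
      |>.toLinearMap).smulRight (castVec u₀)
  have hρx : ρ x = x := by ext; simp [ρ, ht]
  have hρU : ∀ u ∈ U, ρ (castVec u) ∈ castVec '' ↑(U ⊓ LinearMap.ker (LinearMap.proj t)) := by
    intro u hu
    refine ⟨u - (u t / u₀ t) • u₀, ⟨U.sub_mem hu (U.smul_mem _ hu₀), by simp [hu₀t]⟩, ?_⟩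
    ext r
    simp [ρ, div_eq_inv_mul]
  rw [← hρx]
  have hmap := Submodule.mem_map_of_mem (f := ρ) hx
  rw [realSpan, Submodule.map_span] at hmap
  refine Submodule.span_mono ?_ hmap
  rintro _ ⟨_, ⟨u, hu, rfl⟩, rfl⟩
  exact hρU u hu

lemma mem_realSpan_inf_pi_bot [Fintype ι] (Z : Finset ι) (U : Submodule ℚ (ι → ℚ))
    {x : EuclideanSpace ℝ ι} (hx : x ∈ realSpan U) (hZ : ∀ t ∈ Z, x t = 0) :
    x ∈ realSpan (U ⊓ Submodule.pi (Z : Set ι) fun _ => ⊥) := by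
  classical
  induction Z using Finset.induction_on generalizing U with
  | empty => simpa using hx
  | insert t Z _ ih =>
    have hxt := mem_realSpan_inf_ker_proj U hx (hZ t (mem_insert_self t Z))
    refine realSpan_mono ?_ (ih _ hxt fun r hr => hZ r (mem_insert_of_mem hr))
    rintro u ⟨⟨huU, hut⟩, huZ⟩
    refine ⟨huU, ?_⟩
    simp_all

lemma exists_pos_of_mem_realSpan [Fintype ι] (U : Submodule ℚ (ι → ℚ))
    {x : EuclideanSpace ℝ ι} (hx : x ∈ realSpan U) (T : Finset ι) (hT : ∀ t ∈ T, 0 < x t) :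
    ∃ u ∈ U, ∀ t ∈ T, 0 < u t := by
  obtain ⟨k, r, g, hxg⟩ := Submodule.mem_span_set'.1 hx
  choose u huU hug using fun i => (g i).2
  let F : (Fin k → ℝ) → EuclideanSpace ℝ ι := fun c => ∑ i, c i • castVec (u i)
  have hF : Continuous F := by fun_prop
  let V : Set (EuclideanSpace ℝ ι) := {v | ∀ t ∈ T, 0 < v t}
  have hV : IsOpen V := by
    simp only [V, Set.ofPred_forall]
    exact isOpen_biInter_finset fun t _ => isOpen_lt continuous_const (by fun_prop)
  have hFr : F r = x := by simp [F, hug, hxg]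
  have hrat : DenseRange (Pi.map fun (_ : Fin k) (q : ℚ) => (q : ℝ)) :=
    DenseRange.piMap fun _ => Rat.denseRange_cast
  obtain ⟨_, hqV, q, rfl⟩ := hrat.inter_open_nonempty _ (hV.preimage hF)
    ⟨r, by rw [Set.mem_preimage, hFr]; exact hT⟩
  have hFq : F (Pi.map (fun _ (q : ℚ) => (q : ℝ)) q) = castVec (∑ i, q i • u i) := by
    ext; simp [F]
  refine ⟨∑ i, q i • u i, sum_mem fun i _ => U.smul_mem _ (huU i), fun t ht => ?_⟩
  have hqt : 0 < F (Pi.map (fun _ (q : ℚ) => (q : ℝ)) q) t := hqV t ht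
  rw [hFq, castVec_apply] at hqt
  exact Rat.cast_pos.mp hqt

lemma exists_sign_pattern_of_mem_realSpan [Fintype ι] (U : Submodule ℚ (ι → ℚ))
    {x : EuclideanSpace ℝ ι} (hx : x ∈ realSpan U) :
    ∃ u ∈ U, (∀ t, x t = 0 → u t = 0) ∧ ∀ t, 0 < x t → 0 < u t := by
  classical
  have hx₀ := mem_realSpan_inf_pi_bot {t | x t = 0} U hx (by simp)
  obtain ⟨u, ⟨huU, hu₀⟩, hu⟩ := exists_pos_of_mem_realSpan _ hx₀ {t | 0 < x t} (by simp)
  exact ⟨u, huU, fun t ht => by simpa [Submodule.mem_pi, ht] using hu₀ t,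
    fun t ht => hu t (by simpa)⟩

end RationalSubspaces

section CoordinateOrthogonality

lemma Submodule.orthogonal_inf_orthogonal {𝕜 F : Type*} [RCLike 𝕜] [NormedAddCommGroup F]
    [InnerProductSpace 𝕜 F] [FiniteDimensional 𝕜 F] (A B : Submodule 𝕜 F) :
    (Aᗮ ⊓ Bᗮ)ᗮ = A ⊔ B := by
  rw [Submodule.inf_orthogonal, Submodule.orthogonal_orthogonal]

variable {ι : Type*} [DecidableEq ι]

local notation "E" => EuclideanSpace ℝ ι

lemma nonneg_and_exists_pos_of_neg_on_orthant (f : E →L[ℝ] ℝ) (Z : Finset ι)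
    (hf : ∀ w : E, (∀ t ∈ Z, w t < 0) → f w < 0) :
    (∀ t ∈ Z, 0 ≤ f (EuclideanSpace.single t 1)) ∧
      ∃ t ∈ Z, 0 < f (EuclideanSpace.single t 1) := by
  set c : ι → ℝ := fun t => f (EuclideanSpace.single t 1)
  have hw : ∀ v : E, (∀ t ∈ Z, 0 ≤ v t) → -∑ t ∈ Z, c t - f v < 0 := by
    intro v hv
    have := hf (-(∑ t ∈ Z, EuclideanSpace.single t 1) - v) fun t ht => by
      simp [WithLp.ofLp_sum, Finset.sum_apply, ht]
      linarith [hv t ht]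
    simpa [map_sum, c] using this
  have hsum : 0 < ∑ t ∈ Z, c t := by linarith [hw 0 fun _ _ => le_rfl, map_zero f]
  refine ⟨fun t ht => ?_, exists_lt_of_sum_lt (by simpa using hsum)⟩
  by_contra! hneg
  have := hw (((∑ t ∈ Z, c t) / -c t) • EuclideanSpace.single t 1) fun r _ => by
    have : 0 ≤ (∑ t ∈ Z, c t) / -c t := div_nonneg hsum.le (by linarith)
    simp [PiLp.single_apply]
    split_ifs <;> linarith
  rw [map_smul, smul_eq_mul, div_mul_eq_mul_div, mul_div_assoc, div_neg, div_self hneg.ne,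
    mul_neg, mul_one] at this
  linarith

variable [Fintype ι]

def coordSpan (Z : Finset ι) : Submodule ℝ E :=
  Submodule.span ℝ ((fun t => EuclideanSpace.single t 1) '' Z)

lemma mem_orthogonal_coordSpan {Z : Finset ι} {x : E} :
    x ∈ (coordSpan Z)ᗮ ↔ ∀ t ∈ Z, x t = 0 := by
  refine ⟨fun hx t ht => ?_, fun hx => (Submodule.mem_orthogonal _ _).2 fun u hu => ?_⟩
  · simpa [EuclideanSpace.inner_single_left] using Submodule.inner_right_of_mem_orthogonal
      (Submodule.subset_span (Set.mem_image_of_mem _ ht)) hx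
  induction hu using Submodule.span_induction with
  | mem u hu =>
    obtain ⟨t, ht, rfl⟩ := hu
    simp [EuclideanSpace.inner_single_left, hx t ht]
  | zero => simp
  | add u v _ _ hu hv => simp [inner_add_left, hu, hv]
  | smul c u _ hu => simp [inner_smul_left, hu]

lemma apply_eq_zero_of_mem_coordSpan {Z : Finset ι} {z : E} (hz : z ∈ coordSpan Z) {t : ι}
    (ht : t ∉ Z) : z t = 0 := by
  have hsingle : EuclideanSpace.single t (1 : ℝ) ∈ (coordSpan Z)ᗮ :=
    mem_orthogonal_coordSpan.2 fun r hr => by simp [ne_of_mem_of_not_mem hr ht]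
  simpa [EuclideanSpace.inner_single_right] using
    Submodule.inner_right_of_mem_orthogonal hz hsingle

/-- Fredholm alternative. -/
theorem exists_mem_orthogonal_eqOn_compl (L : Submodule ℝ E) (Z : Finset ι) (b : E)
    (hb : ∀ ξ ∈ L, (∀ t ∈ Z, ξ t = 0) → inner ℝ ξ b = 0) :
    ∃ y ∈ Lᗮ, ∀ t ∉ Z, y t = b t := by
  have hb' : b ∈ Lᗮ ⊔ coordSpan Z := by
    rw [← Submodule.orthogonal_inf_orthogonal, Submodule.orthogonal_orthogonal,
      Submodule.mem_orthogonal]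
    rintro ξ ⟨hξL, hξZ⟩
    exact hb ξ hξL (mem_orthogonal_coordSpan.1 hξZ)
  obtain ⟨y, hy, z, hz, rfl⟩ := Submodule.mem_sup.1 hb'
  exact ⟨y, hy, fun t ht => by simp [apply_eq_zero_of_mem_coordSpan hz ht]⟩

/-- Gordan's alternative. -/
theorem exists_mem_orthogonal_neg_on (L : Submodule ℝ E) (Z : Finset ι)
    (hL : ∀ ξ ∈ L, (∀ t ∈ Z, 0 ≤ ξ t) → ∀ t ∈ Z, ξ t = 0) :
    ∃ w ∈ Lᗮ, (∀ t ∉ Z, w t = 0) ∧ ∀ t ∈ Z, w t < 0 := by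
  set K := Lᗮ ⊓ coordSpan Z
  set Ω : Set E := ⋂ t ∈ Z, {w | w t < 0}
  have hΩ : IsOpen Ω := isOpen_biInter_finset fun t _ => isOpen_lt (by fun_prop) continuous_const
  have hΩc : Convex ℝ Ω :=
    convex_iInter₂ fun t _ => convex_halfSpace_lt (EuclideanSpace.proj t).isLinear 0
  by_contra! hK
  have hdisj : Disjoint Ω K := Set.disjoint_left.2 fun w hwΩ hwK => by
    obtain ⟨t, ht, hwt⟩ := hK w hwK.1 fun t ht => apply_eq_zero_of_mem_coordSpan hwK.2 ht
    exact hwt.not_gt (Set.mem_iInter₂.1 hwΩ t ht)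
  obtain ⟨f, u, hfΩ, hfK⟩ := geometric_hahn_banach_open hΩc hΩ K.convex hdisj
  have hu : u ≤ 0 := by simpa using hfK 0 K.zero_mem
  have hfK0 : ∀ k ∈ K, f k = 0 := fun k hk => by
    by_contra hne
    have := hfK _ (K.smul_mem ((u - 1) / f k) hk)
    rw [map_smul, smul_eq_mul, div_mul_cancel₀ _ hne] at this
    linarith
  obtain ⟨hnonneg, t, ht, hpos⟩ := nonneg_and_exists_pos_of_neg_on_orthant f Z
    fun w hw => (hfΩ w (Set.mem_iInter₂.2 hw)).trans_le hu
  -- `f = ⟪φ, ·⟫` with `φ ∈ Kᗮ = L ⊔ (coordSpan Z)ᗮ`; the `L`-component of `φ` contradicts `hL`.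
  set φ := (toDual ℝ E).symm f
  have hφf : ∀ v, inner ℝ φ v = f v := fun v => toDual_symm_apply
  have hφ : φ ∈ L ⊔ (coordSpan Z)ᗮ := by
    rw [← Submodule.orthogonal_inf_orthogonal, Submodule.orthogonal_orthogonal (coordSpan Z),
      Submodule.mem_orthogonal]
    intro k hk
    rw [real_inner_comm, hφf]
    exact hfK0 k hk
  obtain ⟨ξ, hξ, σ, hσ, hφξ⟩ := Submodule.mem_sup.1 hφ
  have hξf : ∀ t ∈ Z, ξ t = f (EuclideanSpace.single t 1) := fun t ht => by
    rw [← hφf, ← hφξ]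
    simp [EuclideanSpace.inner_single_right, mem_orthogonal_coordSpan.1 hσ t ht]
  refine hpos.ne' ?_
  rw [← hξf t ht]
  exact hL ξ hξ (fun t ht => hξf t ht ▸ hnonneg t ht) t ht

end CoordinateOrthogonality

namespace CRN

variable (G : CRN s)

lemma connected_symm_s10 {M N : Fin s → ℕ} (h : G.connected M N) : G.connected N M := by
  induction h with
  | refl => exact .refl
  | tail _ hMN ih => exact .head hMN.symm ih

lemma eventEdge_add_left {M N : Fin s → ℕ} (c : Fin s → ℕ) (h : G.eventEdge M N) :
    G.eventEdge (c + M) (c + N) := by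
  obtain ⟨i, j, c₀, he, rfl, rfl⟩ := h
  exact ⟨i, j, c + c₀, he, (add_assoc _ _ _).symm, (add_assoc _ _ _).symm⟩

lemma connected_add_left {M N : Fin s → ℕ} (c : Fin s → ℕ) (h : G.connected M N) :
    G.connected (c + M) (c + N) :=
  ReflTransGen.lift (c + ·)
    (fun _ _ => Or.imp (G.eventEdge_add_left c) (G.eventEdge_add_left c)) _ _ h

lemma prod_eq_of_connected {k : Type*} [CommRing k] {a : Fin s → k} (hv : G.vanishesAt a)
    {M N : Fin s → ℕ} (h : G.connected M N) : ∏ t, a t ^ M t = ∏ t, a t ^ N t := by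
  have hedge : ∀ {M N}, G.eventEdge M N → ∏ t, a t ^ M t = ∏ t, a t ^ N t := by
    rintro _ _ ⟨i, j, c, he, rfl, rfl⟩
    simp only [Pi.add_apply, pow_add, prod_mul_distrib, hv i j he]
  induction h with
  | refl => rfl
  | tail _ hMN ih => exact ih.trans (hMN.elim hedge fun h => (hedge h).symm)

def connectedDiffs : AddSubgroup (Fin s → ℤ) where
  carrier := {d | ∃ M P : Fin s → ℕ, G.connected M P ∧ d = fun t => (M t : ℤ) - P t}
  zero_mem' := ⟨0, 0, .refl, by ext; simp⟩
  add_mem' := by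
    rintro _ _ ⟨M₁, P₁, h₁, rfl⟩ ⟨M₂, P₂, h₂, rfl⟩
    refine ⟨M₁ + M₂, P₁ + P₂, ?_, by ext; simp; ring⟩
    have h₁' := G.connected_add_left M₂ h₁
    have h₂' := G.connected_add_left P₁ h₂
    rw [add_comm M₂, add_comm M₂] at h₁'
    exact h₁'.trans h₂'
  neg_mem' := by
    rintro _ ⟨M, P, h, rfl⟩
    exact ⟨P, M, G.connected_symm_s10 h, by ext; simp⟩

lemma sub_mem_connectedDiffs {i j : Fin G.n} (h : G.edge i j) :
    (fun t => (G.ψ i t : ℤ) - G.ψ j t) ∈ G.connectedDiffs :=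
  ⟨G.ψ i, G.ψ j, .single (Or.inl ⟨i, j, 0, h, (zero_add _).symm, (zero_add _).symm⟩), rfl⟩

/-- Here `d⁺ = M - gcd(M, P)` and `d⁻ = P - gcd(M, P)` for any connected `M, P` with
`d = M - P`. -/
lemma connected_toNat_of_mem_connectedDiffs (hcat : ¬ G.catalytic) {d : Fin s → ℤ}
    (hd : d ∈ G.connectedDiffs) : G.connected (fun t => (d t).toNat) (fun t => (-d t).toNat) := by
  obtain ⟨M, P, h, rfl⟩ := hd
  simp only [catalytic, not_exists, not_and, not_not] at hcat
  convert hcat M P h using 1 <;> ext t <;> simp [mgcd] <;> omega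

def ratStoich : Submodule ℚ (Fin s → ℚ) :=
  Submodule.span ℚ {v | ∃ i j, G.edge i j ∧ v = fun t => (G.ψ i t : ℚ) - G.ψ j t}

lemma exists_nsmul_mem_connectedDiffs {q : Fin s → ℚ} (hq : q ∈ G.ratStoich) :
    ∃ N : ℕ, 0 < N ∧ ∃ d ∈ G.connectedDiffs, ∀ t, (N : ℚ) * q t = d t := by
  induction hq using Submodule.span_induction with
  | mem v hv =>
    obtain ⟨i, j, h, rfl⟩ := hv
    exact ⟨1, one_pos, _, G.sub_mem_connectedDiffs h, by simp⟩
  | zero => exact ⟨1, one_pos, 0, zero_mem _, by simp⟩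
  | add q₁ q₂ _ _ h₁ h₂ =>
    obtain ⟨N₁, hN₁, d₁, hd₁, hq₁⟩ := h₁
    obtain ⟨N₂, hN₂, d₂, hd₂, hq₂⟩ := h₂
    refine ⟨N₁ * N₂, mul_pos hN₁ hN₂, (N₂ : ℤ) • d₁ + (N₁ : ℤ) • d₂,
      add_mem (zsmul_mem hd₁ _) (zsmul_mem hd₂ _), fun t => ?_⟩
    simp [← hq₁, ← hq₂]
    ring
  | smul c q _ h =>
    obtain ⟨N, hN, d, hd, hq⟩ := h
    refine ⟨c.den * N, mul_pos c.den_pos hN, c.num • d, zsmul_mem hd _, fun t => ?_⟩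
    simp only [Nat.cast_mul, Pi.smul_apply, smul_eq_mul, Int.cast_mul, ← hq]
    linear_combination (N * q t) * Rat.mul_den_eq_num c

variable {G} {a : Fin s → ℝ}

lemma exists_connected_of_mem_ratStoich (hcat : ¬ G.catalytic) {q : Fin s → ℚ}
    (hq : q ∈ G.ratStoich) :
    ∃ (N : ℕ) (d : Fin s → ℤ), 0 < N ∧ (∀ t, (N : ℚ) * q t = d t) ∧
      G.connected (fun t => (d t).toNat) (fun t => (-d t).toNat) := by
  obtain ⟨N, hN, d, hd, hq⟩ := G.exists_nsmul_mem_connectedDiffs hq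
  exact ⟨N, d, hN, hq, G.connected_toNat_of_mem_connectedDiffs hcat hd⟩

lemma sum_mul_log_eq_zero_of_mem_ratStoich (hcat : ¬ G.catalytic) (hv : G.vanishesAt a)
    {q : Fin s → ℚ} (hq : q ∈ G.ratStoich) (hqZ : ∀ t, a t = 0 → q t = 0) :
    ∑ t, (q t : ℝ) * Real.log (a t) = 0 := by
  obtain ⟨N, d, hN, hNq, hconn⟩ := exists_connected_of_mem_ratStoich hcat hq
  have hdZ : ∀ t, a t = 0 → d t = 0 := fun t ht => by
    have := hNq t
    rw [hqZ t ht, mul_zero] at this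
    exact_mod_cast this.symm
  have hlog : ∀ e : Fin s → ℕ, (∀ t, a t = 0 → e t = 0) →
      Real.log (∏ t, a t ^ e t) = ∑ t, (e t : ℝ) * Real.log (a t) := fun e he => by
    rw [Real.log_prod fun t _ => ?_]
    · simp [Real.log_pow]
    by_cases ht : a t = 0 <;> simp [ht, he]
  have hd := congrArg Real.log (G.prod_eq_of_connected hv hconn)
  rw [hlog _ fun t ht => by simp [hdZ t ht], hlog _ fun t ht => by simp [hdZ t ht],
    ← sub_eq_zero, ← sum_sub_distrib] at hd
  have hNd : ∀ t, (N : ℝ) * q t = ((d t).toNat : ℤ) - ((-d t).toNat : ℤ) := by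
    intro t
    rw [← Int.cast_sub, Int.toNat_sub_toNat_neg]
    exact_mod_cast hNq t
  have hsum : (N : ℝ) * ∑ t, (q t : ℝ) * Real.log (a t) = 0 := by
    rw [mul_sum, ← hd]
    refine sum_congr rfl fun t _ => ?_
    rw [← mul_assoc, hNd t]
    push_cast
    ring
  simpa [hN.ne'] using hsum

lemma eq_zero_of_nonneg_of_mem_ratStoich (hcat : ¬ G.catalytic) (hv : G.vanishesAt a)
    {q : Fin s → ℚ} (hq : q ∈ G.ratStoich) (hqZ : ∀ t, a t = 0 → 0 ≤ q t) :
    ∀ t, a t = 0 → q t = 0 := by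
  obtain ⟨N, d, hN, hNq, hconn⟩ := exists_connected_of_mem_ratStoich hcat hq
  have hdq : ∀ t, (d t : ℚ) = N * q t := fun t => (hNq t).symm
  by_contra! hpos
  obtain ⟨t₀, ht₀, hq₀⟩ := hpos
  have hd₀ : 0 < d t₀ := by
    have : (0 : ℚ) < d t₀ := by
      rw [hdq]
      exact mul_pos (by exact_mod_cast hN) (lt_of_le_of_ne (hqZ t₀ ht₀) (Ne.symm hq₀))
    exact_mod_cast this
  have hdZ : ∀ t, a t = 0 → 0 ≤ d t := fun t ht => by
    have : (0 : ℚ) ≤ d t := by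
      rw [hdq]
      exact mul_nonneg (by positivity) (hqZ t ht)
    exact_mod_cast this
  have hlhs : ∏ t, a t ^ (d t).toNat = 0 :=
    prod_eq_zero (mem_univ t₀) (by simp [ht₀, hd₀])
  have hrhs : ∏ t, a t ^ (-d t).toNat ≠ 0 := prod_ne_zero_iff.2 fun t _ => by
    by_cases ht : a t = 0
    · simp [ht, hdZ t ht]
    · exact pow_ne_zero _ ht
  exact hrhs (G.prod_eq_of_connected hv hconn ▸ hlhs)

lemma exists_eq_log_off_zeros (hcat : ¬ G.catalytic) (hv : G.vanishesAt a) :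
    ∃ y ∈ (realSpan G.ratStoich)ᗮ, ∀ t, a t ≠ 0 → y t = Real.log (a t) := by
  classical
  let Z : Finset (Fin s) := {t | a t = 0}
  have hZ : ∀ t, t ∈ Z ↔ a t = 0 := by simp [Z]
  let b : EuclideanSpace ℝ (Fin s) := WithLp.toLp 2 fun t => Real.log (a t)
  have hb : ∀ ξ ∈ realSpan G.ratStoich, (∀ t ∈ Z, ξ t = 0) → inner ℝ ξ b = 0 := by
    intro ξ hξ hξZ
    refine Submodule.inner_left_of_mem_orthogonal (Submodule.mem_span_singleton_self b)
      (Submodule.span_le.2 ?_ (mem_realSpan_inf_pi_bot _ _ hξ hξZ))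
    rintro _ ⟨u, ⟨hu, huZ⟩, rfl⟩
    rw [SetLike.mem_coe, Submodule.mem_orthogonal_singleton_iff_inner_right, real_inner_comm]
    simpa [PiLp.inner_apply, mul_comm, b] using
      sum_mul_log_eq_zero_of_mem_ratStoich hcat hv hu fun t ht => huZ t ((hZ t).2 ht)
  obtain ⟨y, hy, hyb⟩ := exists_mem_orthogonal_eqOn_compl _ _ b hb
  exact ⟨y, hy, fun t ht => hyb t (mt (hZ t).1 ht)⟩

lemma exists_neg_on_zeros (hcat : ¬ G.catalytic) (hv : G.vanishesAt a) :
    ∃ w ∈ (realSpan G.ratStoich)ᗮ, (∀ t, a t ≠ 0 → w t = 0) ∧ ∀ t, a t = 0 → w t < 0 := by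
  classical
  let Z : Finset (Fin s) := {t | a t = 0}
  have hZ : ∀ t, t ∈ Z ↔ a t = 0 := by simp [Z]
  have hL : ∀ ξ ∈ realSpan G.ratStoich, (∀ t ∈ Z, 0 ≤ ξ t) → ∀ t ∈ Z, ξ t = 0 := by
    intro ξ hξ hξZ t ht
    obtain ⟨u, hu, hu₀, hupos⟩ := exists_sign_pattern_of_mem_realSpan _ hξ
    have huZ := eq_zero_of_nonneg_of_mem_ratStoich hcat hv hu fun t ht => by
      rcases (hξZ t ((hZ t).2 ht)).eq_or_lt with h | h
      · exact (hu₀ t h.symm).ge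
      · exact (hupos t h).le
    refine (hξZ t ht).eq_or_lt.elim Eq.symm fun h => ?_
    exact absurd (huZ t ((hZ t).1 ht)) (hupos t h).ne'
  obtain ⟨w, hw, hw₀, hwneg⟩ := exists_mem_orthogonal_neg_on _ _ hL
  exact ⟨w, hw, fun t ht => hw₀ t (mt (hZ t).1 ht), fun t ht => hwneg t ((hZ t).2 ht)⟩

lemma vanishesAt_exp {z : EuclideanSpace ℝ (Fin s)} (hz : z ∈ (realSpan G.ratStoich)ᗮ) :
    G.vanishesAt fun t => Real.exp (z t) := by
  intro i j h
  have hij := Submodule.inner_right_of_mem_orthogonal (Submodule.subset_span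
    (Set.mem_image_of_mem castVec
    (show _ ∈ G.ratStoich from Submodule.subset_span ⟨i, j, h, rfl⟩))) hz
  simp only [← Real.exp_nat_mul, ← Real.exp_sum]
  congr 1
  simpa [PiLp.inner_apply, mul_sub, sum_sub_distrib, sub_eq_zero, mul_comm] using hij

end CRN

theorem positive_zeros_dense_general {s : ℕ} (G : CRN s)
    (hcat : ¬ G.catalytic) :
    {a : Fin s → ℝ | (∀ i, 0 ≤ a i) ∧ G.vanishesAt a} ⊆
      closure {a : Fin s → ℝ | (∀ i, 0 < a i) ∧ G.vanishesAt a} := by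
  rintro a ⟨ha₀, hv⟩
  obtain ⟨y, hy, hya⟩ := G.exists_eq_log_off_zeros hcat hv
  obtain ⟨w, hw, hw₀, hwneg⟩ := G.exists_neg_on_zeros hcat hv
  refine mem_closure_of_tendsto (b := Filter.atTop)
    (f := fun n : ℕ => fun t => Real.exp ((y + (n : ℝ) • w) t))
    (tendsto_pi_nhds.2 fun t => ?_)
    (.of_forall fun n => ⟨fun t => Real.exp_pos _,
      G.vanishesAt_exp (add_mem hy (Submodule.smul_mem _ _ hw))⟩)
  by_cases ht : a t = 0
  · rw [ht]
    refine Real.tendsto_exp_atBot.comp (Filter.tendsto_atBot_add_const_left _ _ ?_)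
    simpa using tendsto_natCast_atTop_atTop.atTop_mul_const_of_neg (hwneg t ht)
  · simp [hya t ht, hw₀ t ht, Real.exp_log ((ha₀ t).lt_of_ne' ht)]

/-- For a weakly-reversible, non-catalytic CRN, the positive real zeros of `E_G`
are dense in the nonnegative real zeros. -/
theorem positive_zeros_dense {s : ℕ} (G : CRN s) (hwr : G.weaklyReversible)
    (hcat : ¬ G.catalytic) :
    {a : Fin s → ℝ | (∀ i, 0 ≤ a i) ∧ G.vanishesAt a} ⊆
      closure {a : Fin s → ℝ | (∀ i, 0 < a i) ∧ G.vanishesAt a} :=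
  positive_zeros_dense_general G hcat
end

section
/- Every weakly-reversible CRN that has a critical siphon is catalytic. -/
open MvPolynomial Relation

variable {s : ℕ}

/-!
Write `p - z = ∑ fᵢ (ψ bᵢ - ψ aᵢ)` over reactions `aᵢ → bᵢ`. As `z` vanishes on `Z` and `p` is
positive, this real combination is positive on `Z`; that condition is open, so by density of `ℚ`
and clearing denominators some integer combination `∑ cᵢ (ψ bᵢ - ψ aᵢ)` is positive on `Z` too.
Event-graph connectedness is compatible with multiplying both ends by a monomial, so the exponent
differences of connected pairs form a group, and this integer combination is `N - M` for some
connected `M`, `N`. Then `M < N` on `Z`: dividing by the gcd leaves `M` free of the species of `Z`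
but not `N`. Under weak reversibility every reaction lies on a directed cycle, so the siphon
property makes "free of `Z`" invariant along undirected event-graph paths, hence the quotients
are disconnected.
-/

section Approximation

variable {ι κ : Type*} [Fintype ι] {Z : Set κ} (v : ι → κ → ℤ)

theorem exists_rat_forall_sum_mul_pos (hZ : Z.Finite) {f : ι → ℝ}
    (hf : ∀ t ∈ Z, 0 < ∑ i, f i * v i t) : ∃ q : ι → ℚ, ∀ t ∈ Z, 0 < ∑ i, q i * v i t := by
  let U : Set (ι → ℝ) := {g | ∀ t ∈ Z, 0 < ∑ i, g i * v i t}
  have hU : IsOpen U := by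
    simp only [U, Set.ofPred_forall]
    exact hZ.isOpen_biInter fun t _ => isOpen_lt continuous_const (by fun_prop)
  have hdense : DenseRange (Pi.map fun _ (x : ℚ) => (x : ℝ) : (ι → ℚ) → ι → ℝ) :=
    DenseRange.piMap fun _ => Rat.denseRange_cast
  obtain ⟨q, hq⟩ := hdense.exists_mem_open hU ⟨f, hf⟩
  refine ⟨q, fun t ht => ?_⟩
  have hqt := hq t ht
  simp only [Pi.map_apply] at hqt
  exact_mod_cast hqt

theorem exists_int_forall_sum_mul_pos {q : ι → ℚ} (hq : ∀ t ∈ Z, 0 < ∑ i, q i * v i t) :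
    ∃ c : ι → ℤ, ∀ t ∈ Z, 0 < ∑ i, c i * v i t := by
  let D : ℕ := ∏ i, (q i).den
  have hD : 0 < D := Finset.prod_pos fun i _ => (q i).den_pos
  have hclear (i : ι) : ∃ c : ℤ, (c : ℚ) = D * q i := by
    obtain ⟨m, hm⟩ : (q i).den ∣ D :=
      Finset.dvd_prod_of_mem (fun i => (q i).den) (Finset.mem_univ i)
    refine ⟨m * (q i).num, ?_⟩
    rw [hm]
    push_cast
    rw [← Rat.mul_den_eq_num (q i)]
    ring
  choose c hc using hclear
  refine ⟨c, fun t ht => ?_⟩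
  have hsum : ((∑ i, c i * v i t : ℤ) : ℚ) = D * ∑ i, q i * v i t := by
    push_cast
    rw [Finset.mul_sum]
    simp only [hc, mul_assoc]
  exact_mod_cast hsum ▸ mul_pos (Nat.cast_pos.mpr hD) (hq t ht)

end Approximation

namespace CRN

variable {G : CRN s} {Z : Set (Fin s)} {M N M' N' : Fin s → ℕ}

theorem eventEdge.add_right (h : G.eventEdge M N) (K : Fin s → ℕ) :
    G.eventEdge (M + K) (N + K) := by
  obtain ⟨i, j, c, hij, rfl, rfl⟩ := h
  exact ⟨i, j, c + K, hij, add_right_comm _ _ _, add_right_comm _ _ _⟩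

theorem connected.add_right (h : G.connected M N) (K : Fin s → ℕ) :
    G.connected (M + K) (N + K) :=
  h.lift (· + K) fun _ _ => Or.imp (·.add_right K) (·.add_right K)

theorem connected.symm (h : G.connected M N) : G.connected N M :=
  ReflTransGen.mono (fun _ _ => Or.symm) _ _ (ReflTransGen.swap _ _ h)

theorem connected.add (h : G.connected M N) (h' : G.connected M' N') :
    G.connected (M + M') (N + N') := by
  have h'' := h'.add_right N
  rw [add_comm M', add_comm N'] at h''
  exact ReflTransGen.trans (h.add_right M') h''

theorem connected_of_edge {i j : Fin G.n} (h : G.edge i j) : G.connected (G.ψ i) (G.ψ j) :=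
  ReflTransGen.single (Or.inl ⟨i, j, 0, h, (zero_add _).symm, (zero_add _).symm⟩)

variable (G) in
def connectedDifferences : AddSubgroup (Fin s → ℤ) where
  carrier := {d | ∃ M N, G.connected M N ∧ d = fun t => (N t : ℤ) - M t}
  zero_mem' := ⟨0, 0, ReflTransGen.refl, by ext; simp⟩
  add_mem' := by
    rintro _ _ ⟨M, N, h, rfl⟩ ⟨M', N', h', rfl⟩
    exact ⟨M + M', N + N', h.add h', by ext; simp only [Pi.add_apply, Nat.cast_add]; ring⟩
  neg_mem' := by
    rintro _ ⟨M, N, h, rfl⟩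
    exact ⟨N, M, h.symm, by ext; simp⟩

theorem exists_connected_of_sum {ι : Type*} [Fintype ι] {a b : ι → Fin G.n}
    (hab : ∀ i, G.edge (a i) (b i)) (c : ι → ℤ) :
    ∃ M N, G.connected M N ∧
      ∀ t, (N t : ℤ) - M t = ∑ i, c i * ((G.ψ (b i) t : ℤ) - G.ψ (a i) t) := by
  have hmem : ∀ i, (fun t => (G.ψ (b i) t : ℤ) - G.ψ (a i) t) ∈ G.connectedDifferences :=
    fun i => ⟨_, _, connected_of_edge (hab i), rfl⟩
  obtain ⟨M, N, h, hMN⟩ := G.connectedDifferences.sum_mem fun i _ => zsmul_mem (hmem i) (c i)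
  refine ⟨M, N, h, fun t => ?_⟩
  simpa using (congrFun hMN t).symm

theorem siphon.eq_zero_of_reflTransGen (hZ : G.siphon Z) {i j : Fin G.n}
    (h : ReflTransGen G.edge i j) (hi : ∀ t ∈ Z, G.ψ i t = 0) : ∀ t ∈ Z, G.ψ j t = 0 := by
  induction h with
  | refl => exact hi
  | tail _ hjk ih =>
    by_contra! hk
    obtain ⟨l, hl, hne⟩ := hZ.2 _ _ hjk hk
    exact hne (ih l hl)

theorem weaklyReversible.reflTransGen_of_edge (hwr : G.weaklyReversible) {i j : Fin G.n}
    (h : G.edge i j ∨ G.edge j i) : ReflTransGen G.edge i j :=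
  hwr i j (ReflTransGen.single h)

theorem connected.eq_zero_of_siphon (hwr : G.weaklyReversible) (hZ : G.siphon Z)
    (h : G.connected M N) (hM : ∀ t ∈ Z, M t = 0) : ∀ t ∈ Z, N t = 0 := by
  induction h with
  | refl => exact hM
  | @tail N N' _ hstep ih =>
    obtain ⟨i, j, c, hij, rfl, rfl⟩ | ⟨j, i, c, hji, rfl, rfl⟩ := hstep
    all_goals
      have hc (t) (ht : t ∈ Z) := Nat.add_eq_zero_iff.mp (ih t ht)
      have hψ := hZ.eq_zero_of_reflTransGen (hwr.reflTransGen_of_edge (by tauto))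
        fun t ht => (hc t ht).2
      intro t ht
      simp [(hc t ht).1, hψ t ht]

theorem catalytic_of_connected_of_lt (hwr : G.weaklyReversible) (hZ : G.siphon Z)
    (h : G.connected M N) (hlt : ∀ t ∈ Z, M t < N t) : G.catalytic := by
  refine ⟨M, N, h, fun hred => ?_⟩
  have hgcd : ∀ t ∈ Z, mgcd M N t = M t := fun t ht => min_eq_left (hlt t ht).le
  have hM : ∀ t ∈ Z, (M - mgcd M N) t = 0 := fun t ht => by simp [hgcd t ht]
  obtain ⟨t, ht⟩ := hZ.1
  have hN := hred.eq_zero_of_siphon hwr hZ hM t ht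
  simp only [Pi.sub_apply, hgcd t ht] at hN
  exact absurd hN (Nat.sub_ne_zero_of_lt (hlt t ht))

theorem exists_sum_eq_of_mem_stoich {x : Fin s → ℝ} (hx : x ∈ G.stoich) :
    ∃ (n : ℕ) (a b : Fin n → Fin G.n) (f : Fin n → ℝ), (∀ i, G.edge (a i) (b i)) ∧
      ∀ t, ∑ i, f i * ((G.ψ (b i) t : ℝ) - G.ψ (a i) t) = x t := by
  obtain ⟨n, f, g, rfl⟩ := Submodule.mem_span_set'.mp hx
  choose a b hab hg using fun i => (g i).2
  refine ⟨n, a, b, f, hab, fun t => ?_⟩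
  simp [hg]

theorem criticalSiphon.exists_connected_lt (hZ : G.criticalSiphon Z) :
    ∃ M N, G.connected M N ∧ ∀ t ∈ Z, M t < N t := by
  obtain ⟨-, z, -, rfl, p, hp, hpz⟩ := hZ
  obtain ⟨n, a, b, f, hab, hf⟩ := exists_sum_eq_of_mem_stoich hpz
  have hpos : ∀ t ∈ {t | z t = 0},
      0 < ∑ i, f i * (((G.ψ (b i) t : ℤ) - G.ψ (a i) t : ℤ) : ℝ) := by
    intro t ht
    push_cast
    rw [hf t, Pi.sub_apply, ht, sub_zero]
    exact hp t
  obtain ⟨q, hq⟩ := exists_rat_forall_sum_mul_pos _ (Set.toFinite _) hpos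
  obtain ⟨c, hc⟩ := exists_int_forall_sum_mul_pos _ hq
  obtain ⟨M, N, h, hMN⟩ := exists_connected_of_sum hab c
  refine ⟨M, N, h, fun t ht => ?_⟩
  have hct := hc t ht
  rw [← hMN] at hct
  omega

end CRN

/-- Main theorem: every weakly-reversible CRN with a critical siphon is catalytic. -/
theorem criticalSiphon_imp_catalytic {s : ℕ} (G : CRN s)
    (hwr : G.weaklyReversible) (h : ∃ Z : Set (Fin s), G.criticalSiphon Z) :
    G.catalytic := by
  obtain ⟨Z, hZ⟩ := h
  obtain ⟨M, N, hMN, hlt⟩ := hZ.exists_connected_lt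
  exact G.catalytic_of_connected_of_lt hwr hZ.1 hMN hlt
end
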